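/- arXiv:1806.07144 — 5 statements merged into one kernel-verified Lean document; each statement's English description precedes it below -/
import Mathlib

section
/- Let A be an action space and L : A × Ω → ℝ∪{±∞} a loss function such that for each P in a class P of probability measures there is a Bayes act a_P ∈ A with ∫ L(a_P,ω) dP(ω) ≤ ∫ L(a,ω) dP(ω) for all a ∈ A. Then S*(P,ω) := L(a_P,ω) is a proper scoring rule relative to P. -/
open MeasureTheory

theorem bayes_act_proper_general {Ω A : Type*} [MeasurableSpace Ω]
    (𝒞 : Set (Measure Ω))
    (L : A → Ω → ℝ)
    (act : Measure Ω → A)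
    (hBayes : ∀ P ∈ 𝒞, ∀ a : A, ∫ ω, L (act P) ω ∂P ≤ ∫ ω, L a ω ∂P) :
    ∀ P ∈ 𝒞, ∀ Q ∈ 𝒞, ∫ ω, L (act Q) ω ∂Q ≤ ∫ ω, L (act P) ω ∂Q :=
  fun P _ Q hQ => hBayes Q hQ (act P)

/-- Bayes act construction (Grünwald–Dawid): given a loss `L : A × Ω → ℝ` and a
Bayes act `act P ∈ A` for each `P` in a class `𝒞` of probability measures, the
scoring rule `S*(P,ω) := L (act P) ω` is proper relative to `𝒞`. -/
theorem bayes_act_proper {Ω A : Type*} [MeasurableSpace Ω]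
    (𝒞 : Set (Measure Ω)) (hprob : ∀ P ∈ 𝒞, IsProbabilityMeasure P)
    (L : A → Ω → ℝ)
    (act : Measure Ω → A)
    (hBayes : ∀ P ∈ 𝒞, ∀ a : A, ∫ ω, L (act P) ω ∂P ≤ ∫ ω, L a ω ∂P) :
    ∀ P ∈ 𝒞, ∀ Q ∈ 𝒞, ∫ ω, L (act Q) ω ∂Q ≤ ∫ ω, L (act P) ω ∂Q :=
  bayes_act_proper_general 𝒞 L act hBayes
end

section
/- Let P be a probability measure on ℝ with finite fourth moment, mean μ, variance σ² > 0, and centered third moment γ. The expected value under P of the trial score S(Q,y) = (σ_Q² − (y − μ_Q)²)², viewed as a function of (μ_Q, σ_Q²) ∈ ℝ × [0,∞), is minimized at μ_Q = μ + γ/(2σ²) and σ_Q² = σ²(1 + γ²/(4σ⁶)). -/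
/-!
Write `m = μ + d`. Expanding `(v - (y - μ - d)²)²` in powers of `y - μ`, the expected score is
`κ - 4dγ + (6d² - 2v)σ² + (v - d²)²` with `κ` the fourth central moment, and completing squares
rewrites it as `κ - σ⁴ - γ²/σ² + (2σ²d - γ)²/σ² + (v - σ² - d²)²`. Both squares vanish at
`d = γ/(2σ²)`, `v = σ² + d²`.
-/

open MeasureTheory ProbabilityTheory

/-- Expected trial score at `(μ + d, v)` of a law with central moments `σ2`, `γ`, `κ`
of orders 2, 3, 4. -/
def trialScoreRisk (σ2 γ κ d v : ℝ) : ℝ :=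
  κ - 4 * d * γ + (6 * d ^ 2 - 2 * v) * σ2 + (v - d ^ 2) ^ 2

section Moments

variable {Ω : Type*} [MeasurableSpace Ω] {P : Measure Ω} {X : Ω → ℝ}

lemma memLp_of_integrable_pow (hX : AEStronglyMeasurable X P) {n : ℕ} (hn : n ≠ 0)
    (h : Integrable (fun ω => X ω ^ n) P) : MemLp X n P := by
  rw [← integrable_norm_rpow_iff hX (by exact_mod_cast hn) (ENNReal.natCast_ne_top n)]
  simpa [Real.rpow_natCast, norm_pow] using h.norm

lemma MeasureTheory.MemLp.integrable_pow [IsFiniteMeasure P] {n k : ℕ} (h : MemLp X n P)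
    (hk : k ≤ n) :
    Integrable (fun ω => X ω ^ k) P := by
  refine (integrable_norm_iff (f := fun ω => X ω ^ k) (h.aestronglyMeasurable.pow k)).mp ?_
  simpa [norm_pow] using (h.mono_exponent (by exact_mod_cast hk)).integrable_norm_pow'

lemma integral_quartic [IsProbabilityMeasure P] (hX : MemLp X 4 P) (a b c e f : ℝ) :
    ∫ ω, (a * X ω ^ 4 + b * X ω ^ 3 + c * X ω ^ 2 + e * X ω + f) ∂P
      = a * ∫ ω, X ω ^ 4 ∂P + b * ∫ ω, X ω ^ 3 ∂P + c * ∫ ω, X ω ^ 2 ∂P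
        + e * ∫ ω, X ω ∂P + f := by
  replace hX : MemLp X (4 : ℕ) P := by exact_mod_cast hX
  have h4 := hX.integrable_pow (le_refl 4)
  have h3 := hX.integrable_pow (show 3 ≤ 4 by norm_num)
  have h2 := hX.integrable_pow (show 2 ≤ 4 by norm_num)
  have h1 : Integrable X P := by simpa using hX.integrable_pow (show 1 ≤ 4 by norm_num)
  rw [integral_add (by fun_prop) (by fun_prop), integral_add (by fun_prop) (by fun_prop),
    integral_add (by fun_prop) (by fun_prop), integral_add (by fun_prop) (by fun_prop)]
  simp [integral_const_mul]

lemma integral_score_eq_trialScoreRisk [IsProbabilityMeasure P] {Y : Ω → ℝ} (hY : MemLp Y 4 P)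
    (m v : ℝ) :
    ∫ ω, (v - (Y ω - m) ^ 2) ^ 2 ∂P
      = trialScoreRisk (centralMoment Y 2 P) (centralMoment Y 3 P) (centralMoment Y 4 P)
          (m - P[Y]) v := by
  set d := m - P[Y]
  have hcentered : MemLp (fun ω => Y ω - P[Y]) 4 P := hY.sub (memLp_const _)
  have hexpand : (fun ω => (v - (Y ω - m) ^ 2) ^ 2) = fun ω =>
      1 * (Y ω - P[Y]) ^ 4 + (-4 * d) * (Y ω - P[Y]) ^ 3 + (6 * d ^ 2 - 2 * v) * (Y ω - P[Y]) ^ 2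
        + 4 * d * (v - d ^ 2) * (Y ω - P[Y]) + (v - d ^ 2) ^ 2 := by
    funext ω; ring
  have hmoment (k : ℕ) : ∫ ω, (Y ω - P[Y]) ^ k ∂P = centralMoment Y k P := rfl
  have hmean : ∫ ω, (Y ω - P[Y]) ∂P = 0 := by simpa using hmoment 1
  rw [hexpand, integral_quartic hcentered, hmoment, hmoment, hmoment, hmean, trialScoreRisk]
  ring

end Moments

lemma trialScoreRisk_le {σ2 γ κ : ℝ} (hσ2 : 0 < σ2) (d v : ℝ) :
    trialScoreRisk σ2 γ κ (γ / (2 * σ2)) (σ2 * (1 + γ ^ 2 / (4 * σ2 ^ 3)))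
      ≤ trialScoreRisk σ2 γ κ d v := by
  have hcomplete (d v : ℝ) : trialScoreRisk σ2 γ κ d v
      = κ - σ2 ^ 2 - γ ^ 2 / σ2 + (2 * σ2 * d - γ) ^ 2 / σ2 + (v - σ2 - d ^ 2) ^ 2 := by
    rw [trialScoreRisk]
    field_simp
    ring
  have hmean_opt : 2 * σ2 * (γ / (2 * σ2)) - γ = 0 := by field_simp; ring
  have hvar_opt : σ2 * (1 + γ ^ 2 / (4 * σ2 ^ 3)) - σ2 - (γ / (2 * σ2)) ^ 2 = 0 := by
    field_simp; ring
  rw [hcomplete, hcomplete, hmean_opt, hvar_opt]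
  have hexcess : 0 ≤ (2 * σ2 * d - γ) ^ 2 / σ2 + (v - σ2 - d ^ 2) ^ 2 := by positivity
  simp only [zero_pow two_ne_zero, zero_div, add_zero]
  linarith

/-- Example 3 (spread-error score). For `P` with finite fourth moment, mean `μ`,
variance `σ² > 0`, and centered third moment `γ`, the expected trial score
`∫ (v − (y − m)²)² dP(y)` over `(m, v) ∈ ℝ × [0,∞)` is minimized at
`m = μ + γ/(2σ²)` and `v = σ²(1 + γ²/(4σ⁶))`. -/
theorem trial_score_bayes_act
    (P : Measure ℝ) (hP : IsProbabilityMeasure P)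
    (h4 : Integrable (fun y => y ^ 4) P)
    (μ σ2 γ : ℝ)
    (hμ : μ = ∫ y, y ∂P)
    (hσ2 : σ2 = ∫ y, (y - μ) ^ 2 ∂P) (hσ2pos : 0 < σ2)
    (hγ : γ = ∫ y, (y - μ) ^ 3 ∂P) :
    ∀ m : ℝ, ∀ v : ℝ, 0 ≤ v →
      ∫ y, (σ2 * (1 + γ ^ 2 / (4 * σ2 ^ 3)) -
          (y - (μ + γ / (2 * σ2))) ^ 2) ^ 2 ∂P
        ≤ ∫ y, (v - (y - m) ^ 2) ^ 2 ∂P := by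
  intro m v _
  have hY : MemLp (fun y : ℝ => y) 4 P := by
    exact_mod_cast memLp_of_integrable_pow aestronglyMeasurable_id (n := 4) (by norm_num) h4
  have hmean : P[fun y : ℝ => y] = μ := hμ.symm
  have hvar : centralMoment (fun y : ℝ => y) 2 P = σ2 := by rw [hσ2, hμ]; rfl
  have hskew : centralMoment (fun y : ℝ => y) 3 P = γ := by rw [hγ, hμ]; rfl
  rw [integral_score_eq_trialScoreRisk hY, integral_score_eq_trialScoreRisk hY, hmean, hvar, hskew,
    add_sub_cancel_left]
  exact trialScoreRisk_le hσ2pos (m - μ) v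
end

section
/- Let P be a probability measure on ℝ with finite second moment, mean μ_P and variance σ_P². The expected value under P of S(Q,y) = (y − μ_Q)² + σ_Q², as a function of (μ_Q, σ_Q²) ∈ ℝ × [0,∞), is minimized uniquely at μ_Q = μ_P and σ_Q² = 0; in particular the predictive model choice criterion S is improper whenever σ_P² > 0. -/
open MeasureTheory ProbabilityTheory

/-!
The mean squared distance from a point `m` splits as variance plus squared bias,
`∫ (y - m)² dP = σ_P² + (μ_P - m)²`. Hence the expected score of `(m, v)` is
`σ_P² + (μ_P - m)² + v`, which is minimal exactly at `m = μ_P`, `v = 0`, and is strictly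
smaller there than at the truthful report `(μ_P, σ_P²)` as soon as `σ_P² > 0`.
-/

theorem integral_sub_const_sq_eq_variance_add {Ω : Type*} {mΩ : MeasurableSpace Ω}
    {μ : Measure Ω} [IsProbabilityMeasure μ] {X : Ω → ℝ} (hX : MemLp X 2 μ) (m : ℝ) :
    ∫ ω, (X ω - m) ^ 2 ∂μ = Var[X; μ] + (μ[X] - m) ^ 2 := by
  have hshift := variance_eq_sub (X := fun ω => X ω - m) (hX.sub (memLp_const m))
  rw [variance_sub_const hX.aestronglyMeasurable m] at hshift
  rw [hshift, integral_sub (hX.integrable one_le_two) (integrable_const m)]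
  simp

theorem pmcc_improper_general
    (P : Measure ℝ) (hP : IsProbabilityMeasure P)
    (h2 : Integrable (fun y => y ^ 2) P)
    (μP σ2P : ℝ)
    (hμ : μP = ∫ y, y ∂P) :
    (∀ m : ℝ, ∀ v : ℝ, 0 ≤ v →
        (∫ y, (y - μP) ^ 2 ∂P) + 0 ≤ (∫ y, (y - m) ^ 2 ∂P) + v) ∧
      (∀ m : ℝ, ∀ v : ℝ, 0 ≤ v →
        (∫ y, (y - μP) ^ 2 ∂P) + 0 = (∫ y, (y - m) ^ 2 ∂P) + v →
        m = μP ∧ v = 0) ∧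
      (0 < σ2P →
        (∫ y, (y - μP) ^ 2 ∂P) + 0 < (∫ y, (y - μP) ^ 2 ∂P) + σ2P) := by
  have hL2 : MemLp (fun y : ℝ => y) 2 P :=
    (memLp_two_iff_integrable_sq aestronglyMeasurable_id).2 h2
  have hdecomp (m : ℝ) :
      ∫ y, (y - m) ^ 2 ∂P = (∫ y, (y - μP) ^ 2 ∂P) + (m - μP) ^ 2 := by
    rw [integral_sub_const_sq_eq_variance_add hL2, integral_sub_const_sq_eq_variance_add hL2,
      ← hμ]
    ring
  refine ⟨fun m v hv => ?_, fun m v hv heq => ?_, fun hσ => by linarith⟩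
  · rw [hdecomp m]
    nlinarith [sq_nonneg (m - μP)]
  · rw [hdecomp m] at heq
    have hbias : (m - μP) ^ 2 = 0 := by nlinarith [sq_nonneg (m - μP)]
    exact ⟨sub_eq_zero.1 (pow_eq_zero_iff two_ne_zero |>.1 hbias), by linarith⟩

/-- Example 4 (predictive model choice criterion). For `P` with finite second
moment, mean `μ_P` and variance `σ_P²`, the expected score
`∫ ((y − m)² + v) dP(y)` over `(m, v) ∈ ℝ × [0,∞)` is minimized uniquely at
`m = μ_P`, `v = 0`; in particular the score is improper whenever `σ_P² > 0`. -/
theorem pmcc_improper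
    (P : Measure ℝ) (hP : IsProbabilityMeasure P)
    (h2 : Integrable (fun y => y ^ 2) P)
    (μP σ2P : ℝ)
    (hμ : μP = ∫ y, y ∂P)
    (hσ2 : σ2P = ∫ y, (y - μP) ^ 2 ∂P) :
    (∀ m : ℝ, ∀ v : ℝ, 0 ≤ v →
        (∫ y, (y - μP) ^ 2 ∂P) + 0 ≤ (∫ y, (y - m) ^ 2 ∂P) + v) ∧
      (∀ m : ℝ, ∀ v : ℝ, 0 ≤ v →
        (∫ y, (y - μP) ^ 2 ∂P) + 0 = (∫ y, (y - m) ^ 2 ∂P) + v →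
        m = μP ∧ v = 0) ∧
      (0 < σ2P →
        (∫ y, (y - μP) ^ 2 ∂P) + 0 < (∫ y, (y - μP) ^ 2 ∂P) + σ2P) :=
  pmcc_improper_general P hP h2 μP σ2P hμ
end

section
/- Let P, Q, Φ be cumulative distribution functions on ℝ with finite first moments. Then ∫∫ (P(x) − Φ(x−y))² dQ(y) dx = ∫∫ (P(x) − 1_{y≤x})² d(Q*Φ)(y) dx − ∫ Φ(x)(1 − Φ(x)) dx, where Q*Φ denotes the convolution of Q and Φ. -/
/-!
Conditioning `Q ∗ Φ` on its `Q`-component turns `1_{y ≤ x}` into a Bernoulli variable with mean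
`Φ(x - u)`, and the quadratic loss of a Bernoulli variable with mean `b` against `a` is
`(a - b)² + b (1 - b)`. Integrating over `x`, the variance term becomes `∫ Φ (1 - Φ)` by
translation invariance of Lebesgue measure. All of this is an identity in `[0, ∞]`; the first
moments only make `CRPS(P, Q ∗ Φ)` finite, through `∫ |F_P(x) - 1_{y ≤ x}| dx ≤ E_P |Z - y|`,
so that the identity may be rearranged in `ℝ`.
-/

open MeasureTheory
open scoped ENNReal

namespace ProbabilityTheory

@[fun_prop]
theorem measurable_ite_le {α : Type*} [MeasurableSpace α] {f g : α → ℝ} (hf : Measurable f)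
    (hg : Measurable g) : Measurable fun a => if f a ≤ g a then (1 : ℝ) else 0 :=
  Measurable.ite (measurableSet_le hf hg) measurable_const measurable_const

@[fun_prop]
theorem measurable_cdf (μ : Measure ℝ) : Measurable (cdf μ) :=
  (monotone_cdf μ).measurable

theorem cdf_mem_Icc (μ : Measure ℝ) (x : ℝ) : cdf μ x ∈ Set.Icc (0 : ℝ) 1 :=
  ⟨cdf_nonneg μ x, cdf_le_one μ x⟩

theorem ite_mem_Icc (p : Prop) [Decidable p] : (if p then (1 : ℝ) else 0) ∈ Set.Icc (0 : ℝ) 1 := by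
  split_ifs <;> simp

theorem abs_sub_le_one_of_mem_Icc {a b : ℝ} (ha : a ∈ Set.Icc (0 : ℝ) 1)
    (hb : b ∈ Set.Icc (0 : ℝ) 1) : |a - b| ≤ 1 := by
  simpa using abs_sub_le_of_le_of_le ha.1 ha.2 hb.1 hb.2

theorem sq_sub_le_abs_sub {a b : ℝ} (ha : a ∈ Set.Icc (0 : ℝ) 1) (hb : b ∈ Set.Icc (0 : ℝ) 1) :
    (a - b) ^ 2 ≤ |a - b| := by
  rw [← sq_abs]
  exact pow_le_of_le_one (abs_nonneg _) (abs_sub_le_one_of_mem_Icc ha hb) two_ne_zero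

theorem integrable_sq_sub_of_mem_Icc {β : Type*} [MeasurableSpace β] {ν : Measure β}
    [IsFiniteMeasure ν] {f g : β → ℝ} (hf : Measurable f) (hg : Measurable g)
    (hf01 : ∀ y, f y ∈ Set.Icc (0 : ℝ) 1) (hg01 : ∀ y, g y ∈ Set.Icc (0 : ℝ) 1) :
    Integrable (fun y => (f y - g y) ^ 2) ν :=
  Integrable.of_bound (by fun_prop) 1 (ae_of_all _ fun y => by
    rw [Real.norm_of_nonneg (sq_nonneg _)]
    exact (sq_sub_le_abs_sub (hf01 y) (hg01 y)).trans (abs_sub_le_one_of_mem_Icc (hf01 y) (hg01 y)))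

theorem integral_integral_eq_toReal_lintegral_lintegral {α β : Type*} [MeasurableSpace α]
    [MeasurableSpace β] {μ : Measure α} {ν : Measure β} [SFinite ν] {f : α → β → ℝ}
    (hf : Measurable (Function.uncurry f)) (hf0 : ∀ x y, 0 ≤ f x y)
    (hfi : ∀ x, Integrable (f x) ν) :
    ∫ x, ∫ y, f x y ∂ν ∂μ = (∫⁻ x, ∫⁻ y, ENNReal.ofReal (f x y) ∂ν ∂μ).toReal := by
  have hinner : ∀ x, ∫ y, f x y ∂ν = (∫⁻ y, ENNReal.ofReal (f x y) ∂ν).toReal := fun x =>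
    integral_eq_lintegral_of_nonneg_ae (ae_of_all _ (hf0 x)) (hfi x).aestronglyMeasurable
  simp_rw [hinner]
  exact integral_toReal (hf.ennreal_ofReal.lintegral_prod_right').aemeasurable
    (ae_of_all _ fun x => (hfi x).lintegral_lt_top)

theorem lintegral_lintegral_add_eq {α β : Type*} [MeasurableSpace α] [MeasurableSpace β]
    (μ : Measure α) (ν : Measure β) [IsProbabilityMeasure μ] [IsProbabilityMeasure ν]
    (f : α → ℝ≥0∞) (g : β → ℝ≥0∞) :
    ∫⁻ x, ∫⁻ y, (f x + g y) ∂ν ∂μ = ∫⁻ x, f x ∂μ + ∫⁻ y, g y ∂ν := by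
  simp_rw [lintegral_add_left measurable_const, lintegral_const, measure_univ, mul_one]
  rw [lintegral_add_right _ measurable_const, lintegral_const, measure_univ, mul_one]

theorem lintegral_lintegral_sub {G : Type*} [MeasurableSpace G] [AddGroup G] [MeasurableAdd₂ G]
    [MeasurableNeg G] (μ : Measure G) [μ.IsAddRightInvariant] [SFinite μ] (ν : Measure G)
    [SFinite ν] {k : G → ℝ≥0∞} (hk : Measurable k) :
    ∫⁻ x, ∫⁻ y, k (x - y) ∂ν ∂μ = ν Set.univ * ∫⁻ t, k t ∂μ := by
  rw [lintegral_lintegral_swap (by fun_prop)]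
  simp_rw [lintegral_sub_right_eq_self k]
  rw [lintegral_const, mul_comm]

theorem lintegral_enorm_conv_le {E : Type*} [NormedAddCommGroup E] [MeasurableSpace E]
    [OpensMeasurableSpace E] [MeasurableAdd₂ E] (μ ν : Measure E) [IsProbabilityMeasure μ]
    [IsProbabilityMeasure ν] :
    ∫⁻ z, ‖z‖ₑ ∂(μ ∗ ν) ≤ ∫⁻ z, ‖z‖ₑ ∂μ + ∫⁻ z, ‖z‖ₑ ∂ν := by
  rw [Measure.lintegral_conv measurable_enorm]
  calc ∫⁻ x, ∫⁻ y, ‖x + y‖ₑ ∂ν ∂μ ≤ ∫⁻ x, ∫⁻ y, (‖x‖ₑ + ‖y‖ₑ) ∂ν ∂μ :=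
        lintegral_mono fun x => lintegral_mono fun y => enorm_add_le x y
    _ = ∫⁻ z, ‖z‖ₑ ∂μ + ∫⁻ z, ‖z‖ₑ ∂ν := lintegral_lintegral_add_eq μ ν _ _

noncomputable def crps (P μ : Measure ℝ) : ℝ≥0∞ :=
  ∫⁻ x, ∫⁻ y, ENNReal.ofReal ((cdf P x - if y ≤ x then 1 else 0) ^ 2) ∂μ

theorem lintegral_sq_sub_ite_le (Φ : Measure ℝ) [IsProbabilityMeasure Φ] (a t : ℝ) :
    ∫⁻ v, ENNReal.ofReal ((a - if v ≤ t then (1 : ℝ) else 0) ^ 2) ∂Φ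
      = ENNReal.ofReal ((a - cdf Φ t) ^ 2) + ENNReal.ofReal (cdf Φ t * (1 - cdf Φ t)) := by
  have hpoint : (fun v => (a - if v ≤ t then (1 : ℝ) else 0) ^ 2)
      = fun v => a ^ 2 + (1 - 2 * a) * (Set.Iic t).indicator 1 v := by
    funext v
    by_cases hv : v ≤ t
    · simp only [hv, ↓reduceIte, Set.mem_Iic, Set.indicator_of_mem, Pi.one_apply]
      ring
    · simp [hv]
  have hind : Integrable (fun v => (1 - 2 * a) * (Set.Iic t).indicator 1 v) Φ :=
    ((integrable_const 1).indicator measurableSet_Iic).const_mul _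
  have hmean : ∫ v, (a - if v ≤ t then (1 : ℝ) else 0) ^ 2 ∂Φ
      = (a - cdf Φ t) ^ 2 + cdf Φ t * (1 - cdf Φ t) := by
    rw [hpoint, integral_add (integrable_const _) hind, integral_const_mul,
      integral_indicator_one measurableSet_Iic, cdf_eq_real]
    simp only [integral_const, probReal_univ, smul_eq_mul, one_mul]
    ring
  obtain ⟨h0, h1⟩ := cdf_mem_Icc Φ t
  rw [← ENNReal.ofReal_add (sq_nonneg _) (by nlinarith), ← hmean,
    ofReal_integral_eq_lintegral_ofReal (hpoint ▸ (integrable_const _).add hind)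
      (ae_of_all _ fun v => sq_nonneg _)]

theorem lintegral_conv_sq_sub_ite_le (Q Φ : Measure ℝ) [IsProbabilityMeasure Φ] (a x : ℝ) :
    ∫⁻ y, ENNReal.ofReal ((a - if y ≤ x then (1 : ℝ) else 0) ^ 2) ∂(Q ∗ Φ)
      = ∫⁻ u, ENNReal.ofReal ((a - cdf Φ (x - u)) ^ 2) ∂Q
        + ∫⁻ u, ENNReal.ofReal (cdf Φ (x - u) * (1 - cdf Φ (x - u))) ∂Q := by
  rw [Measure.lintegral_conv (by fun_prop)]
  simp_rw [← le_sub_iff_add_le', lintegral_sq_sub_ite_le]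
  exact lintegral_add_left (by fun_prop) _

theorem crps_conv (P Q Φ : Measure ℝ) [IsProbabilityMeasure Q] [IsProbabilityMeasure Φ] :
    crps P (Q ∗ Φ)
      = (∫⁻ x, ∫⁻ y, ENNReal.ofReal ((cdf P x - cdf Φ (x - y)) ^ 2) ∂Q)
        + ∫⁻ t, ENNReal.ofReal (cdf Φ t * (1 - cdf Φ t)) := by
  simp_rw [crps, lintegral_conv_sq_sub_ite_le]
  rw [lintegral_add_left (by fun_prop), lintegral_lintegral_sub volume Q
    (k := fun t => ENNReal.ofReal (cdf Φ t * (1 - cdf Φ t))) (by fun_prop), measure_univ,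
    one_mul]

theorem lintegral_enorm_ite_sub_ite (y z : ℝ) :
    ∫⁻ x, ‖(if z ≤ x then (1 : ℝ) else 0) - if y ≤ x then 1 else 0‖ₑ = ‖z - y‖ₑ := by
  have hstep : (fun x => ‖(if z ≤ x then (1 : ℝ) else 0) - if y ≤ x then 1 else 0‖ₑ)
      = (Set.Ico (min y z) (max y z)).indicator 1 := by
    funext x
    simp only [Set.indicator_apply, Set.mem_Ico, min_le_iff, lt_max_iff, Pi.one_apply]
    split_ifs <;> simp <;> grind
  rw [hstep, lintegral_indicator_one measurableSet_Ico, Real.volume_Ico, max_sub_min_eq_abs,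
    Real.enorm_eq_ofReal_abs]

theorem lintegral_enorm_cdf_sub_ite_le (P : Measure ℝ) [IsProbabilityMeasure P] (y : ℝ) :
    ∫⁻ x, ‖cdf P x - if y ≤ x then 1 else 0‖ₑ ≤ ∫⁻ z, ‖z - y‖ₑ ∂P := by
  have hrep : ∀ x, cdf P x - (if y ≤ x then 1 else 0)
      = ∫ z, ((if z ≤ x then (1 : ℝ) else 0) - if y ≤ x then 1 else 0) ∂P := by
    intro x
    have hind : (fun z => if z ≤ x then (1 : ℝ) else 0) = (Set.Iic x).indicator 1 := by
      funext z
      simp [Set.indicator_apply]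
    rw [integral_sub (hind ▸ (integrable_const 1).indicator measurableSet_Iic)
      (integrable_const _), hind, integral_indicator_one measurableSet_Iic, cdf_eq_real]
    simp
  calc ∫⁻ x, ‖cdf P x - if y ≤ x then 1 else 0‖ₑ
      = ∫⁻ x, ‖∫ z, ((if z ≤ x then (1 : ℝ) else 0) - if y ≤ x then 1 else 0) ∂P‖ₑ := by
        simp_rw [hrep]
    _ ≤ ∫⁻ x, ∫⁻ z, ‖(if z ≤ x then (1 : ℝ) else 0) - if y ≤ x then 1 else 0‖ₑ ∂P :=
        lintegral_mono fun x => enorm_integral_le_lintegral_enorm _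
    _ = ∫⁻ z, (∫⁻ x, ‖(if z ≤ x then (1 : ℝ) else 0) - if y ≤ x then 1 else 0‖ₑ) ∂P := by
        rw [lintegral_lintegral_swap (by fun_prop)]
    _ = ∫⁻ z, ‖z - y‖ₑ ∂P := by simp_rw [lintegral_enorm_ite_sub_ite]

theorem crps_ne_top (P ν : Measure ℝ) [IsProbabilityMeasure P] [IsProbabilityMeasure ν]
    (hP : ∫⁻ z, ‖z‖ₑ ∂P ≠ ∞) (hν : ∫⁻ y, ‖y‖ₑ ∂ν ≠ ∞) : crps P ν ≠ ∞ := by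
  refine ne_top_of_le_ne_top (ENNReal.add_ne_top.2 ⟨hν, hP⟩) ?_
  calc crps P ν = ∫⁻ x, ∫⁻ y, ENNReal.ofReal ((cdf P x - if y ≤ x then 1 else 0) ^ 2) ∂ν := rfl
    _ ≤ ∫⁻ x, ∫⁻ y, ‖cdf P x - if y ≤ x then 1 else 0‖ₑ ∂ν :=
        lintegral_mono fun x => lintegral_mono fun y => by
          rw [Real.enorm_eq_ofReal_abs]
          exact ENNReal.ofReal_le_ofReal (sq_sub_le_abs_sub (cdf_mem_Icc P x) (ite_mem_Icc _))
    _ = ∫⁻ y, (∫⁻ x, ‖cdf P x - if y ≤ x then 1 else 0‖ₑ) ∂ν := by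
        rw [lintegral_lintegral_swap (by fun_prop)]
    _ ≤ ∫⁻ y, ∫⁻ z, ‖y - z‖ₑ ∂P ∂ν :=
        lintegral_mono fun y => (lintegral_enorm_cdf_sub_ite_le P y).trans_eq
          (lintegral_congr fun z => enorm_sub_rev z y)
    _ ≤ ∫⁻ y, ∫⁻ z, (‖y‖ₑ + ‖z‖ₑ) ∂P ∂ν :=
        lintegral_mono fun y => lintegral_mono fun z => enorm_sub_le
    _ = ∫⁻ y, ‖y‖ₑ ∂ν + ∫⁻ z, ‖z‖ₑ ∂P := lintegral_lintegral_add_eq ν P _ _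

end ProbabilityTheory

open ProbabilityTheory

/-- Example 6: for probability measures `P, Q, Φ` on `ℝ` with finite first moments
and CDFs `F_P, F_Q, F_Φ`, one has
`∫∫ (F_P(x) − F_Φ(x−y))² dQ(y) dx
  = ∫∫ (F_P(x) − 1_{y≤x})² d(Q∗Φ)(y) dx − ∫ F_Φ(x)(1−F_Φ(x)) dx`. -/
theorem noisy_crps_identity
    (P Q Φ : Measure ℝ)
    (hP : IsProbabilityMeasure P) (hQ : IsProbabilityMeasure Q)
    (hΦ : IsProbabilityMeasure Φ)
    (hP1 : Integrable (fun y : ℝ => y) P)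
    (hQ1 : Integrable (fun y : ℝ => y) Q)
    (hΦ1 : Integrable (fun y : ℝ => y) Φ) :
    ∫ x : ℝ, (∫ y, ((P (Set.Iic x)).toReal - (Φ (Set.Iic (x - y))).toReal) ^ 2 ∂Q)
      = (∫ x : ℝ, (∫ y, ((P (Set.Iic x)).toReal - (if y ≤ x then (1:ℝ) else 0)) ^ 2
            ∂(Q.conv Φ)))
        - ∫ x : ℝ, (Φ (Set.Iic x)).toReal * (1 - (Φ (Set.Iic x)).toReal) := by
  simp only [← measureReal_def, ← cdf_eq_real]
  have hconvMoment : ∫⁻ z, ‖z‖ₑ ∂(Q ∗ Φ) ≠ ∞ :=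
    ((lintegral_enorm_conv_le Q Φ).trans_lt (ENNReal.add_lt_top.2 ⟨hQ1.2, hΦ1.2⟩)).ne
  have hfin := crps_ne_top P (Q ∗ Φ) hP1.2.ne hconvMoment
  rw [crps_conv] at hfin
  obtain ⟨hnoisy, hspread⟩ := ENNReal.add_ne_top.1 hfin
  rw [integral_integral_eq_toReal_lintegral_lintegral (by fun_prop) (fun _ _ => sq_nonneg _)
      fun x => integrable_sq_sub_of_mem_Icc measurable_const (by fun_prop)
        (fun _ => cdf_mem_Icc P x) fun y => cdf_mem_Icc Φ (x - y),
    integral_integral_eq_toReal_lintegral_lintegral (by fun_prop) (fun _ _ => sq_nonneg _)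
      fun x => integrable_sq_sub_of_mem_Icc measurable_const (by fun_prop)
        (fun _ => cdf_mem_Icc P x) fun y => ite_mem_Icc _,
    integral_eq_lintegral_of_nonneg_ae (ae_of_all _ fun t => ?_) (by fun_prop)]
  · rw [← crps, crps_conv, ENNReal.toReal_add hnoisy hspread]
    ring
  · obtain ⟨h0, h1⟩ := cdf_mem_Icc Φ t
    exact mul_nonneg h0 (by linarith)
end

section
/- The linear score LinS(p, y) = −p(y) on densities admits no Bayes act relative to the class of all Lebesgue probability densities: for every density q which is symmetric about 0 and strictly increasing on (−∞,0), and every density p, there exists a density p̃ with ∫ p̃(y) q(y) dy > ∫ p(y) q(y) dy; hence inf over p of LinS(p, Q) = −∫ p q is not attained. -/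
open MeasureTheory

/-- `p` is a Lebesgue probability density on `ℝ`. -/
def IsDensity (p : ℝ → ℝ) : Prop :=
  Measurable p ∧ (∀ y, 0 ≤ p y) ∧ (∫ y, p y) = 1

/-!
Let `c = ∫ p q`. If `q ≤ c` on `(-∞, 0)`, then strict monotonicity and symmetry give `q < c`
off `0`, hence almost everywhere, and averaging against `p` yields `∫ p q < c`, which is absurd.
So `c < q y₀` for some `y₀ < 0`; on `[y₀, 0)` we have `q ≥ q y₀`, and the uniform density on that
interval scores `⨍ q > c`.
-/

lemma IsDensity.integrable {p : ℝ → ℝ} (hp : IsDensity p) : Integrable p :=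
  Integrable.of_integral_ne_zero (by rw [hp.2.2]; exact one_ne_zero)

section Averages

variable {α : Type*} [MeasurableSpace α] {μ : Measure α}

lemma integral_mul_lt_of_ae_lt {p g : α → ℝ} {c : ℝ} (hp0 : 0 ≤ᵐ[μ] p) (hpi : Integrable p μ)
    (hp : 0 < ∫ y, p y ∂μ) (hpg : Integrable (fun y => p y * g y) μ) (hg : ∀ᵐ y ∂μ, g y < c) :
    ∫ y, p y * g y ∂μ < c * ∫ y, p y ∂μ := by
  have hgap : Integrable (fun y => c * p y - p y * g y) μ := (hpi.const_mul c).sub hpg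
  have hgap0 : 0 ≤ᵐ[μ] fun y => c * p y - p y * g y := by
    filter_upwards [hp0, hg] with y (hpy : 0 ≤ p y) hgy
    show 0 ≤ c * p y - p y * g y
    rw [mul_comm c, ← mul_sub]
    exact mul_nonneg hpy (sub_pos.mpr hgy).le
  have hsupp : Function.support p ≤ᵐ[μ] Function.support fun y => c * p y - p y * g y := by
    filter_upwards [hg] with y hgy (hpy : p y ≠ 0)
    show c * p y - p y * g y ≠ 0
    rw [mul_comm c, ← mul_sub]
    exact mul_ne_zero hpy (sub_ne_zero.mpr hgy.ne')
  rw [integral_pos_iff_support_of_nonneg_ae hp0 hpi] at hp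
  have hpos := (integral_pos_iff_support_of_nonneg_ae hgap0 hgap).mpr
    (hp.trans_le (measure_mono_ae hsupp))
  rw [integral_sub (hpi.const_mul c) hpg, integral_const_mul] at hpos
  linarith

lemma lt_setAverage_of_forall_lt {s : Set α} {f : α → ℝ} {c : ℝ} (hμ : μ s ≠ 0) (hμ₁ : μ s ≠ ⊤)
    (hf : IntegrableOn f s μ) (hc : ∀ x ∈ s, c < f x) : c < ⨍ x in s, f x ∂μ := by
  obtain ⟨x, hx, hfx⟩ := exists_le_setAverage hμ hμ₁ hf
  exact (hc x hx).trans_le hfx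

end Averages

section Uniform

noncomputable def uniformDensity (s : Set ℝ) : ℝ → ℝ :=
  s.indicator fun _ => (volume.real s)⁻¹

variable {s : Set ℝ}

lemma isDensity_uniformDensity (hs : MeasurableSet s) (h₀ : volume s ≠ 0) (h₁ : volume s ≠ ⊤) :
    IsDensity (uniformDensity s) := by
  refine ⟨measurable_const.indicator hs, fun y => Set.indicator_nonneg (fun _ _ => ?_) y, ?_⟩
  · exact inv_nonneg.mpr measureReal_nonneg
  · have hpos : volume.real s ≠ 0 := (ENNReal.toReal_pos h₀ h₁).ne'
    rw [uniformDensity, integral_indicator hs, setIntegral_const, smul_eq_mul, mul_inv_cancel₀ hpos]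

lemma uniformDensity_mul_eq_indicator (q : ℝ → ℝ) :
    (fun y => uniformDensity s y * q y) = s.indicator fun y => (volume.real s)⁻¹ * q y := by
  ext y
  by_cases hy : y ∈ s <;> simp [uniformDensity, hy]

lemma integrable_uniformDensity_mul (hs : MeasurableSet s) {q : ℝ → ℝ} (hq : IntegrableOn q s) :
    Integrable fun y => uniformDensity s y * q y := by
  rw [uniformDensity_mul_eq_indicator]
  exact (integrable_indicator_iff hs).mpr (hq.const_mul _)

lemma integral_uniformDensity_mul (hs : MeasurableSet s) (q : ℝ → ℝ) :
    ∫ y, uniformDensity s y * q y = ⨍ y in s, q y := by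
  rw [uniformDensity_mul_eq_indicator, integral_indicator hs, integral_const_mul,
    setAverage_eq, smul_eq_mul]

end Uniform

lemma lt_of_forall_neg_le {q : ℝ → ℝ} {c y : ℝ} (hsym : ∀ y, q (-y) = q y)
    (hmono : StrictMonoOn q (Set.Iio 0)) (hc : ∀ y < 0, q y ≤ c) (hy : y ≠ 0) : q y < c := by
  wlog hneg : y < 0 generalizing y
  · rw [← hsym]
    exact this (neg_ne_zero.mpr hy) (by linarith [hy.lt_or_gt.resolve_left hneg])
  calc q y < q (y / 2) := hmono hneg (show y / 2 < 0 by linarith) (by linarith)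
    _ ≤ c := hc _ (by linarith)

/-- Example 7: the linear score `LinS(p,y) = −p(y)` admits no Bayes act. For every
density `q` symmetric about `0` and strictly increasing on `(−∞,0)`, and every
density `p`, there is a density `p̃` with `∫ p̃ q > ∫ p q`; hence the infimum of
the expected linear score `−∫ p q` is not attained. -/
theorem linear_score_no_bayes_act
    (q : ℝ → ℝ) (hq : IsDensity q)
    (hsym : ∀ y, q (-y) = q y)
    (hmono : StrictMonoOn q (Set.Iio (0:ℝ)))
    (p : ℝ → ℝ) (hp : IsDensity p)
    (hint : Integrable (fun y => p y * q y)) :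
    ∃ pt : ℝ → ℝ, IsDensity pt ∧ Integrable (fun y => pt y * q y) ∧
      (∫ y, p y * q y) < ∫ y, pt y * q y := by
  obtain ⟨y₀, hy₀, hcy₀⟩ : ∃ y₀ < (0 : ℝ), ∫ y, p y * q y < q y₀ := by
    by_contra! hle
    have hlt : ∀ᵐ y, q y < ∫ y, p y * q y := by
      filter_upwards [Measure.ae_ne volume 0] with y hy
      exact lt_of_forall_neg_le hsym hmono hle hy
    have := integral_mul_lt_of_ae_lt (ae_of_all _ hp.2.1) hp.integrable
      (by rw [hp.2.2]; exact one_pos) hint hlt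
    rw [hp.2.2, mul_one] at this
    exact this.false
  have hs : MeasurableSet (Set.Ico y₀ 0) := measurableSet_Ico
  have h₀ : volume (Set.Ico y₀ 0) ≠ 0 := by simpa using hy₀
  have h₁ : volume (Set.Ico y₀ 0) ≠ ⊤ := measure_Ico_lt_top.ne
  refine ⟨uniformDensity (Set.Ico y₀ 0), isDensity_uniformDensity hs h₀ h₁,
    integrable_uniformDensity_mul hs hq.integrable.integrableOn, ?_⟩
  rw [integral_uniformDensity_mul hs]
  refine lt_setAverage_of_forall_lt h₀ h₁ hq.integrable.integrableOn fun y hy => ?_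
  exact hcy₀.trans_le (hmono.monotoneOn (Set.mem_Iio.mpr hy₀) hy.2 hy.1)
end
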